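/- arXiv:math/0504500 — 7 statements merged into one kernel-verified Lean document; each statement's English description precedes it below -/
import Mathlib

section
/- Let R be a commutative ring of characteristic 2 and μ ∈ R. In the polynomial ring R[y₁, y₂, y₃, y_∞], substituting z₁ = y₂², z₂ = y₁², z₃ = y₂y₃ + y₁y_∞, z_∞ = y_∞² + y₁y₂ into the quartic P(z) = μ²z₁³z₂ + z₁³z_∞ + z₁²z₂z₃ + μ⁴z₁²z₃² + z₁z₂³ + z₂²z_∞² + z₃⁴ yields the identity P(y₂², y₁², y₂y₃ + y₁y_∞, y_∞² + y₁y₂) = y₂⁴ · (y₁³y_∞ + μ²y₁²y₂² + y₁²y₂y₃ + μ⁴(y₁²y_∞² + y₂²y₃²) + y₁y₂³ + y₂²y_∞² + y₃⁴). -/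
open MvPolynomial in
/-- Substituting the Verschiebung quadrics `z₁ = y₂²`, `z₂ = y₁²`, `z₃ = y₂y₃ + y₁y_∞`,
`z_∞ = y_∞² + y₁y₂` into the Kummer quartic `P(z)` of `X` yields `y₂⁴` times the Kummer
quartic of the Frobenius twist `X₁`, as an identity in `R[y₁, y₂, y₃, y_∞]` for any
commutative ring `R` of characteristic 2 and any `μ ∈ R`. -/
theorem stmt1 (R : Type*) [CommRing R] [CharP R 2] (μ : R) :
    let y₁ : MvPolynomial (Fin 4) R := X 0
    let y₂ : MvPolynomial (Fin 4) R := X 1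
    let y₃ : MvPolynomial (Fin 4) R := X 2
    let y₀ : MvPolynomial (Fin 4) R := X 3
    let z₁ := y₂ ^ 2
    let z₂ := y₁ ^ 2
    let z₃ := y₂ * y₃ + y₁ * y₀
    let z₀ := y₀ ^ 2 + y₁ * y₂
    (C μ) ^ 2 * z₁ ^ 3 * z₂ + z₁ ^ 3 * z₀ + z₁ ^ 2 * z₂ * z₃ + (C μ) ^ 4 * z₁ ^ 2 * z₃ ^ 2
        + z₁ * z₂ ^ 3 + z₂ ^ 2 * z₀ ^ 2 + z₃ ^ 4
      = y₂ ^ 4 * (y₁ ^ 3 * y₀ + (C μ) ^ 2 * y₁ ^ 2 * y₂ ^ 2 + y₁ ^ 2 * y₂ * y₃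
        + (C μ) ^ 4 * (y₁ ^ 2 * y₀ ^ 2 + y₂ ^ 2 * y₃ ^ 2)
        + y₁ * y₂ ^ 3 + y₂ ^ 2 * y₀ ^ 2 + y₃ ^ 4) := by
  intro y₁ y₂ y₃ y₀ z₁ z₂ z₃ z₀
  have h2 : (2 : MvPolynomial (Fin 4) R) = 0 := by
    have := CharP.cast_eq_zero (MvPolynomial (Fin 4) R) 2
    simpa using this
  linear_combination (2 * y₁ * y₂ ^ 3 * y₃ ^ 3 * y₀ + y₁ * y₂ ^ 5 * y₃ * y₀ * (C μ) ^ 4 + 3 * y₁ ^ 2 * y₂ ^ 2 * y₃ ^ 2 * y₀ ^ 2 + 2 * y₁ ^ 3 * y₂ * y₃ * y₀ ^ 3 + y₁ ^ 4 * y₀ ^ 4 + y₁ ^ 5 * y₂ * y₀ ^ 2 + y₁ ^ 6 * y₂ ^ 2) * h2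
end

section
/- Let k be an algebraically closed field of characteristic 2 and let (A, B, C, D) ∈ k⁴ with A ≠ 0. Then there exists (y₁, y₂, y₃, y_∞) ∈ k⁴ with y₂² = A, y₁² = B, y₂y₃ + y₁y_∞ = C, and y_∞² + y₁y₂ = D; moreover, any two nonzero vectors y, y' ∈ k⁴ such that (Q₁(y), Q₂(y), Q₃(y), Q_∞(y)) and (Q₁(y'), Q₂(y'), Q₃(y'), Q_∞(y')) are both nonzero scalar multiples of (A, B, C, D) are themselves proportional. That is, the fiber of the map y ↦ (Q₁(y) : Q₂(y) : Q₃(y) : Q_∞(y)) over any point (A : B : C : D) of ℙ³(k) with A ≠ 0 is a single point. -/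
private lemma sq_eq {k : Type*} [Field k] [CharP k 2] {a b : k}
    (h : a ^ 2 = b ^ 2) : a = b := by
  have h2 : (2 : k) = 0 := CharP.cast_eq_zero k 2
  have hz : (a - b) ^ 2 = 0 := by linear_combination h + (b ^ 2 - a * b) * h2
  have := pow_eq_zero_iff (M₀ := k) (n := 2) (by norm_num) |>.mp hz
  exact sub_eq_zero.mp this

/-- Over an algebraically closed field of characteristic 2, the fiber of the Verschiebung
map `y ↦ (y₂² : y₁² : y₂y₃ + y₁y_∞ : y_∞² + y₁y₂)` over a point `(A : B : C : D)` with
`A ≠ 0` is a single point: the system is solvable, and any two nonzero solutions up to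
nonzero scalar are proportional. -/
theorem stmt2 (k : Type*) [Field k] [IsAlgClosed k] [CharP k 2]
    (A B C D : k) (hA : A ≠ 0) :
    (∃ y₁ y₂ y₃ y₀ : k,
        y₂ ^ 2 = A ∧ y₁ ^ 2 = B ∧ y₂ * y₃ + y₁ * y₀ = C ∧ y₀ ^ 2 + y₁ * y₂ = D) ∧
    (∀ y₁ y₂ y₃ y₀ y₁' y₂' y₃' y₀' : k,
      (y₁, y₂, y₃, y₀) ≠ (0, 0, 0, 0) → (y₁', y₂', y₃', y₀') ≠ (0, 0, 0, 0) →
      (∃ t : k, t ≠ 0 ∧ y₂ ^ 2 = t * A ∧ y₁ ^ 2 = t * B ∧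
        y₂ * y₃ + y₁ * y₀ = t * C ∧ y₀ ^ 2 + y₁ * y₂ = t * D) →
      (∃ t' : k, t' ≠ 0 ∧ y₂' ^ 2 = t' * A ∧ y₁' ^ 2 = t' * B ∧
        y₂' * y₃' + y₁' * y₀' = t' * C ∧ y₀' ^ 2 + y₁' * y₂' = t' * D) →
      ∃ c : k, c ≠ 0 ∧ y₁' = c * y₁ ∧ y₂' = c * y₂ ∧ y₃' = c * y₃ ∧ y₀' = c * y₀) := by
  have h2 : (2 : k) = 0 := CharP.cast_eq_zero k 2
  constructor
  · obtain ⟨y₂, hy₂⟩ := IsAlgClosed.exists_pow_nat_eq A (n := 2) (by norm_num)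
    obtain ⟨y₁, hy₁⟩ := IsAlgClosed.exists_pow_nat_eq B (n := 2) (by norm_num)
    have hy₂0 : y₂ ≠ 0 := fun h => hA (by rw [← hy₂, h]; ring)
    obtain ⟨y₀, hy₀⟩ := IsAlgClosed.exists_pow_nat_eq (D + y₁ * y₂) (n := 2) (by norm_num)
    refine ⟨y₁, y₂, (C + y₁ * y₀) / y₂, y₀, hy₂, hy₁, ?_, ?_⟩
    · field_simp
      linear_combination (y₁ * y₀) * h2
    · linear_combination hy₀ + (y₁ * y₂) * h2
  · rintro y₁ y₂ y₃ y₀ y₁' y₂' y₃' y₀' _ _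
      ⟨t, ht, h2e, h1e, h3e, h0e⟩ ⟨t', ht', h2e', h1e', h3e', h0e'⟩
    have hy₂ : y₂ ≠ 0 := fun h => by
      rw [h] at h2e
      rcases mul_eq_zero.mp (by linear_combination -h2e : t * A = 0) with h' | h'
      · exact ht h'
      · exact hA h'
    have hy₂' : y₂' ≠ 0 := fun h => by
      rw [h] at h2e'
      rcases mul_eq_zero.mp (by linear_combination -h2e' : t' * A = 0) with h' | h'
      · exact ht' h'
      · exact hA h'
    set c := y₂' / y₂ with hc
    have hc0 : c ≠ 0 := div_ne_zero hy₂' hy₂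
    have hcy₂ : y₂' = c * y₂ := by rw [hc, div_mul_cancel₀ _ hy₂]
    have hc2 : c ^ 2 * t = t' := by
      have h' : c ^ 2 * (t * A) = t' * A := by
        rw [← h2e, ← h2e', hcy₂]; ring
      exact mul_right_cancel₀ hA (by linear_combination h')
    have hcy₁ : y₁' = c * y₁ := by
      apply sq_eq
      rw [h1e', ← hc2, mul_pow, h1e]; ring
    have hcy₀ : y₀' = c * y₀ := by
      apply sq_eq
      have := h0e'
      rw [hcy₁, hcy₂, ← hc2] at this
      linear_combination this - c ^ 2 * h0e
    have hcy₃ : y₃' = c * y₃ := by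
      apply mul_left_cancel₀ hy₂'
      have := h3e'
      rw [hcy₁, hcy₀, ← hc2] at this
      have h'' : y₂' * y₃' = c ^ 2 * (y₂ * y₃) := by
        linear_combination this - c ^ 2 * h3e
      rw [h'', hcy₂]; ring
    exact ⟨c, hc0, hcy₁, hcy₂, hcy₃, hcy₀⟩
end

section
/- Let k be a field of characteristic 2 and let B, C, D ∈ k with C² ≠ BD. Then there is no nonzero vector (y₁, y₂, y₃, y_∞) ∈ k⁴ and nonzero scalar t ∈ k with y₂² = 0, y₁² = tB, y₂y₃ + y₁y_∞ = tC, and y_∞² + y₁y₂ = tD. Consequently, the points (0 : B : C : D) of ℙ³(k) with C² ≠ BD are not in the image of the map y ↦ (Q₁(y) : Q₂(y) : Q₃(y) : Q_∞(y)), which is therefore not surjective. -/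
/-- Over a field of characteristic 2, a point `(0 : B : C : D)` with `C² ≠ BD` is not in
the image of the Verschiebung map `y ↦ (y₂² : y₁² : y₂y₃ + y₁y_∞ : y_∞² + y₁y₂)`:
the fiber over such a point is empty, so the Verschiebung is not surjective. -/
theorem stmt4 (k : Type*) [Field k] [CharP k 2] (B C D : k) (h : C ^ 2 ≠ B * D) :
    ¬ ∃ y₁ y₂ y₃ y₀ t : k, (y₁, y₂, y₃, y₀) ≠ (0, 0, 0, 0) ∧ t ≠ 0 ∧
      y₂ ^ 2 = 0 ∧ y₁ ^ 2 = t * B ∧ y₂ * y₃ + y₁ * y₀ = t * C ∧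
      y₀ ^ 2 + y₁ * y₂ = t * D := by
  rintro ⟨y₁, y₂, y₃, y₀, t, hne, ht, h2, h1, h3, h4⟩
  have hy₂ : y₂ = 0 := by
    have := pow_eq_zero_iff (n := 2) (by norm_num) |>.mp h2
    exact this
  subst hy₂
  apply h
  have key : t ^ 2 * C ^ 2 = t ^ 2 * (B * D) := by
    have : (y₁ * y₀) ^ 2 = (t * B) * (t * D) := by
      rw [mul_pow, h1]
      simp only [zero_mul, mul_zero, add_zero] at h4
      rw [h4]
    simp only [mul_zero, zero_mul, zero_add] at h3
    calc t ^ 2 * C ^ 2 = (t * C) ^ 2 := by ring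
      _ = (y₁ * y₀) ^ 2 := by rw [h3]
      _ = (t * B) * (t * D) := this
      _ = t ^ 2 * (B * D) := by ring
  exact mul_left_cancel₀ (pow_ne_zero 2 ht) key
end

section
/- Let k be a perfect field of characteristic 2. (i) For every (y₁, y₂, y₃, y_∞) ∈ k⁴ with y₂ = 0 and (y₁, y_∞) ≠ (0, 0), the image vector (Q₁(y), Q₂(y), Q₃(y), Q_∞(y)) = (0, y₁², y₁y_∞, y_∞²) is nonzero and satisfies z₁ = 0 and z₃² = z₂z_∞. (ii) Conversely, every nonzero (0, B, C, D) ∈ k⁴ with C² = BD equals (Q₁(y), Q₂(y), Q₃(y), Q_∞(y)) for some y with y₂ = 0. Hence the Verschiebung contracts the hyperplane H₁ = (y₂ = 0) exactly onto the conic {z₁ = 0, z₃² = z₂z_∞} in ℙ³(k). -/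
/-- Over a perfect field of characteristic 2, the Verschiebung contracts the hyperplane
`H₁ = (y₂ = 0)` exactly onto the conic `{z₁ = 0, z₃² = z₂z_∞}`:
(i) the image of any point of `H₁` (not the base point) is a nonzero vector lying on the
conic; (ii) every nonzero point of the conic arises this way. -/
theorem stmt6 (k : Type*) [Field k] [CharP k 2] [PerfectField k] :
    (∀ y₁ y₂ y₃ y₀ : k, y₂ = 0 → (y₁, y₀) ≠ (0, 0) →
      (y₂ ^ 2, y₁ ^ 2, y₂ * y₃ + y₁ * y₀, y₀ ^ 2 + y₁ * y₂) ≠ ((0 : k), 0, 0, 0) ∧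
      y₂ ^ 2 = 0 ∧
      (y₂ * y₃ + y₁ * y₀) ^ 2 = y₁ ^ 2 * (y₀ ^ 2 + y₁ * y₂)) ∧
    (∀ B C D : k, ((0 : k), B, C, D) ≠ (0, 0, 0, 0) → C ^ 2 = B * D →
      ∃ y₁ y₂ y₃ y₀ : k, y₂ = 0 ∧
        y₂ ^ 2 = 0 ∧ y₁ ^ 2 = B ∧ y₂ * y₃ + y₁ * y₀ = C ∧ y₀ ^ 2 + y₁ * y₂ = D) := by
  have hfrob : Function.Bijective (frobenius k 2) := bijective_frobenius k 2
  have hsq : ∀ a : k, ∃ b : k, b ^ 2 = a := fun a => hfrob.surjective a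
  have hinj : ∀ a b : k, a ^ 2 = b ^ 2 → a = b := by
    intro a b h
    exact hfrob.injective (by simpa [frobenius_def] using h)
  constructor
  · intro y₁ y₂ y₃ y₀ h2 hne
    subst h2
    refine ⟨?_, by ring, by ring⟩
    intro h
    apply hne
    have h1 : y₁ ^ 2 = 0 := congrArg (fun p => p.2.1) h
    have h2 : y₀ ^ 2 + y₁ * 0 = 0 := congrArg (fun p => p.2.2.2) h
    have : y₀ ^ 2 = 0 := by linear_combination h2
    exact Prod.ext (pow_eq_zero_iff two_ne_zero |>.1 h1)
      (pow_eq_zero_iff two_ne_zero |>.1 this)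
  · intro B C D hne hC
    obtain ⟨b, hb⟩ := hsq B
    obtain ⟨d, hd⟩ := hsq D
    have hbd : (b * d) ^ 2 = C ^ 2 := by rw [hC, ← hb, ← hd]; ring
    have hbdC : b * d = C := hinj _ _ hbd
    exact ⟨b, 0, 0, d, rfl, by ring, hb, by rw [← hbdC]; ring, by rw [hd.symm]; ring⟩
end

section
/- Let k be an algebraically closed field of characteristic 2 and μ ∈ k. For every nonzero (A, B, C, D) ∈ k⁴ with μ²A³B + A³D + A²BC + μ⁴A²C² + AB³ + B²D² + C⁴ = 0, there exists a nonzero (y₁, y₂, y₃, y_∞) ∈ k⁴ with y₁³y_∞ + μ²y₁²y₂² + y₁²y₂y₃ + μ⁴(y₁²y_∞² + y₂²y₃²) + y₁y₂³ + y₂²y_∞² + y₃⁴ = 0 such that (y₂², y₁², y₂y₃ + y₁y_∞, y_∞² + y₁y₂) is a nonzero scalar multiple of (A, B, C, D). That is, the Verschiebung maps the Kummer quartic of X₁ onto the Kummer quartic of X. -/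
/-- The Verschiebung of a supersingular genus 2 curve over an algebraically closed field
of characteristic 2 maps the Kummer quartic of the Frobenius twist `X₁` onto the Kummer
quartic of `X`: every nonzero point of `Kum_X` is, up to a nonzero scalar, the image of a
nonzero point of `Kum_{X₁}`. -/
theorem stmt8 (k : Type*) [Field k] [IsAlgClosed k] [CharP k 2] (μ A B C D : k)
    (h0 : (A, B, C, D) ≠ (0, 0, 0, 0))
    (hK : μ ^ 2 * A ^ 3 * B + A ^ 3 * D + A ^ 2 * B * C + μ ^ 4 * A ^ 2 * C ^ 2
        + A * B ^ 3 + B ^ 2 * D ^ 2 + C ^ 4 = 0) :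
    ∃ y₁ y₂ y₃ y₀ : k, (y₁, y₂, y₃, y₀) ≠ (0, 0, 0, 0) ∧
      y₁ ^ 3 * y₀ + μ ^ 2 * y₁ ^ 2 * y₂ ^ 2 + y₁ ^ 2 * y₂ * y₃
        + μ ^ 4 * (y₁ ^ 2 * y₀ ^ 2 + y₂ ^ 2 * y₃ ^ 2)
        + y₁ * y₂ ^ 3 + y₂ ^ 2 * y₀ ^ 2 + y₃ ^ 4 = 0 ∧
      ∃ t : k, t ≠ 0 ∧ y₂ ^ 2 = t * A ∧ y₁ ^ 2 = t * B ∧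
        y₂ * y₃ + y₁ * y₀ = t * C ∧ y₀ ^ 2 + y₁ * y₂ = t * D := by
  have h2 : (2 : k) = 0 := by
    have := CharP.cast_eq_zero k 2
    exact_mod_cast this
  by_cases hA : A = 0
  · by_cases hB : B = 0
    · -- A = B = 0, hence C = 0 and D ≠ 0
      have hC : C = 0 := by
        have h4 : C ^ 4 = 0 := by rw [hA, hB] at hK; linear_combination hK
        exact pow_eq_zero_iff (by norm_num) |>.mp h4
      have hD : D ≠ 0 := fun h => h0 (by simp [hA, hB, hC, h])
      obtain ⟨y₀, hy0⟩ := IsAlgClosed.exists_pow_nat_eq D (n := 2) (by norm_num)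
      have hy0ne : y₀ ≠ 0 := fun h => hD (by rw [← hy0, h]; ring)
      exact ⟨0, 0, 0, y₀, by simp [hy0ne], by ring, 1, one_ne_zero, by simp [hA],
        by simp [hB], by simp [hC], by simpa using hy0⟩
    · -- A = 0, B ≠ 0
      have hCD : C ^ 2 = B * D := by
        have h4 : (C ^ 2 + B * D) ^ 2 = 0 := by
          rw [hA] at hK; linear_combination hK + (B * D * C ^ 2) * h2
        have h5 := pow_eq_zero_iff (n := 2) (by norm_num) |>.mp h4
        linear_combination h5 - B * D * h2
      obtain ⟨y₁, hy1⟩ := IsAlgClosed.exists_pow_nat_eq B (n := 2) (by norm_num)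
      have hy1ne : y₁ ≠ 0 := fun h => hB (by rw [← hy1, h]; ring)
      obtain ⟨y₀, hC'⟩ : ∃ y₀, y₁ * y₀ = C := ⟨C / y₁, by field_simp⟩
      have hD' : y₀ ^ 2 = D := by
        have h6 : y₁ ^ 2 * y₀ ^ 2 = y₁ ^ 2 * D := by
          linear_combination (y₁ * y₀ + C) * hC' + hCD - D * hy1
        exact mul_left_cancel₀ (pow_ne_zero 2 hy1ne) h6
      obtain ⟨y₃, hy3⟩ := IsAlgClosed.exists_pow_nat_eq
        (y₁ ^ 3 * y₀ + μ ^ 4 * (y₁ ^ 2 * y₀ ^ 2)) (n := 4) (by norm_num)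
      refine ⟨y₁, 0, y₃, y₀, by simp [hy1ne], ?_, 1, one_ne_zero, by simp [hA],
        by simpa using hy1, by simpa using hC', by simpa using hD'⟩
      linear_combination hy3 + (y₁ ^ 3 * y₀ + μ ^ 4 * y₁ ^ 2 * y₀ ^ 2) * h2
  · -- A ≠ 0
    obtain ⟨y₂, hy2⟩ := IsAlgClosed.exists_pow_nat_eq A (n := 2) (by norm_num)
    have hy2ne : y₂ ≠ 0 := fun h => hA (by rw [← hy2, h]; ring)
    obtain ⟨y₁, hy1⟩ := IsAlgClosed.exists_pow_nat_eq B (n := 2) (by norm_num)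
    obtain ⟨y₀, hy0⟩ := IsAlgClosed.exists_pow_nat_eq (D + y₁ * y₂) (n := 2) (by norm_num)
    have hD' : y₀ ^ 2 + y₁ * y₂ = D := by linear_combination hy0 + y₁ * y₂ * h2
    obtain ⟨y₃, hy3⟩ : ∃ y₃, y₂ * y₃ = C + y₁ * y₀ := ⟨(C + y₁ * y₀) / y₂, by field_simp⟩
    have hC' : y₂ * y₃ + y₁ * y₀ = C := by linear_combination hy3 + y₁ * y₀ * h2
    rw [← hy2, ← hy1, ← hC', ← hD'] at hK
    have key : y₂ ^ 4 * (y₁ ^ 3 * y₀ + μ ^ 2 * y₁ ^ 2 * y₂ ^ 2 + y₁ ^ 2 * y₂ * y₃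
        + μ ^ 4 * (y₁ ^ 2 * y₀ ^ 2 + y₂ ^ 2 * y₃ ^ 2)
        + y₁ * y₂ ^ 3 + y₂ ^ 2 * y₀ ^ 2 + y₃ ^ 4) = 0 := by
      linear_combination hK - (2 * y₁ * y₂ ^ 3 * y₃ ^ 3 * y₀ + y₁ * y₂ ^ 5 * y₃ * y₀ * μ ^ 4
        + 3 * y₁ ^ 2 * y₂ ^ 2 * y₃ ^ 2 * y₀ ^ 2 + 2 * y₁ ^ 3 * y₂ * y₃ * y₀ ^ 3
        + y₁ ^ 4 * y₀ ^ 4 + y₁ ^ 5 * y₂ * y₀ ^ 2 + y₁ ^ 6 * y₂ ^ 2) * h2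
    have hP : y₁ ^ 3 * y₀ + μ ^ 2 * y₁ ^ 2 * y₂ ^ 2 + y₁ ^ 2 * y₂ * y₃
        + μ ^ 4 * (y₁ ^ 2 * y₀ ^ 2 + y₂ ^ 2 * y₃ ^ 2)
        + y₁ * y₂ ^ 3 + y₂ ^ 2 * y₀ ^ 2 + y₃ ^ 4 = 0 := by
      rcases mul_eq_zero.mp key with h | h
      · exact absurd h (pow_ne_zero 4 hy2ne)
      · exact h
    exact ⟨y₁, y₂, y₃, y₀, by simp [hy2ne], hP, 1, one_ne_zero, by simpa using hy2,
      by simpa using hy1, by simpa using hC', by simpa using hD'⟩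
end

section
/- Let k be a field of characteristic 2 and μ ∈ k. Suppose (a, b, c, d) ∈ k⁴ is nonzero and is not a scalar multiple of (0, 0, 1, μ). Then the vector (μ⁴a⁴ + b⁴, a⁴, a²d² + b²c², μ⁴c⁴ + d⁴ + μ²a⁴ + a²b²) is nonzero and is not a scalar multiple of (0, 0, 1, μ). -/
/-- In the coordinates of Theorem 4.2, the absolute Frobenius pull-back sends
`(a : b : c : d)` to `(μ⁴a⁴ + b⁴ : a⁴ : a²d² + b²c² : μ⁴c⁴ + d⁴ + μ²a⁴ + a²b²)`, and the
complement of the bundle `E_bad = (0 : 0 : 1 : μ)` is stable under this action: if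
`(a, b, c, d)` is nonzero and not a scalar multiple of `(0, 0, 1, μ)`, so is its image. -/
theorem stmt10 (k : Type*) [Field k] [CharP k 2] (μ a b c d : k)
    (h0 : (a, b, c, d) ≠ (0, 0, 0, 0))
    (h1 : ∀ t : k, (a, b, c, d) ≠ (0, 0, t, t * μ)) :
    (μ ^ 4 * a ^ 4 + b ^ 4, a ^ 4, a ^ 2 * d ^ 2 + b ^ 2 * c ^ 2,
        μ ^ 4 * c ^ 4 + d ^ 4 + μ ^ 2 * a ^ 4 + a ^ 2 * b ^ 2) ≠ ((0 : k), 0, 0, 0) ∧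
    ∀ t : k, (μ ^ 4 * a ^ 4 + b ^ 4, a ^ 4, a ^ 2 * d ^ 2 + b ^ 2 * c ^ 2,
        μ ^ 4 * c ^ 4 + d ^ 4 + μ ^ 2 * a ^ 4 + a ^ 2 * b ^ 2) ≠ ((0 : k), 0, t, t * μ) := by
  have h2 : (2 : k) = 0 := by exact_mod_cast CharP.cast_eq_zero k 2
  have key : ∀ t : k, (μ ^ 4 * a ^ 4 + b ^ 4, a ^ 4, a ^ 2 * d ^ 2 + b ^ 2 * c ^ 2,
      μ ^ 4 * c ^ 4 + d ^ 4 + μ ^ 2 * a ^ 4 + a ^ 2 * b ^ 2) ≠ ((0 : k), 0, t, t * μ) := by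
    intro t h
    simp only [Prod.mk.injEq] at h
    obtain ⟨e1, e2, e3, e4⟩ := h
    have ha : a = 0 := by
      have := pow_eq_zero_iff (n := 4) (by norm_num) |>.mp e2
      exact this
    subst ha
    have hb : b = 0 := by
      have : b ^ 4 = 0 := by linear_combination e1
      exact pow_eq_zero_iff (n := 4) (by norm_num) |>.mp this
    subst hb
    have ht : t = 0 := by
      have := e3; simpa using this.symm
    subst ht
    have h4 : μ ^ 4 * c ^ 4 + d ^ 4 = 0 := by
      have := e4; simpa using this
    have hpow : (μ * c + d) ^ 4 = 0 := by
      linear_combination h4 + (2 * μ ^ 3 * c ^ 3 * d + 3 * μ ^ 2 * c ^ 2 * d ^ 2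
        + 2 * μ * c * d ^ 3) * h2
    have hsum : μ * c + d = 0 := pow_eq_zero_iff (n := 4) (by norm_num) |>.mp hpow
    have hd : d = c * μ := by linear_combination hsum - μ * c * h2
    exact h1 c (by simp [hd])
  refine ⟨?_, key⟩
  have := key 0
  simpa using this
end

section
/- Let k be an algebraically closed field of characteristic 2. A nonzero vector (A, B, C, D) ∈ k⁴ is a nonzero scalar multiple of (Q₁(y), Q₂(y), Q₃(y), Q_∞(y)) = (y₂², y₁², y₂y₃ + y₁y_∞, y_∞² + y₁y₂) for some (y₁, y₂, y₃, y_∞) ∈ k⁴ if and only if A ≠ 0 or C² = BD. Hence the image of the map (y₁ : y₂ : y₃ : y_∞) ↦ (Q₁ : Q₂ : Q₃ : Q_∞) on ℙ³(k) minus its base point (0 : 0 : 1 : 0) is {(A : B : C : D) : A ≠ 0} ∪ {(0 : B : C : D) : C² = BD}; in particular this map is dominant but not surjective. -/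
private lemma sqrt_exists {k : Type*} [Field k] [IsAlgClosed k] (a : k) :
    ∃ x : k, x ^ 2 = a := IsAlgClosed.exists_pow_nat_eq a (n := 2) (by norm_num)

private lemma sq_inj {k : Type*} [Field k] [CharP k 2] {x y : k}
    (h : x ^ 2 = y ^ 2) : x = y := by
  have h2 : (x + y) ^ 2 = 0 := by
    have := CharTwo.add_sq x y
    rw [this, h, CharTwo.add_self_eq_zero]
  have hxy : x + y = 0 := pow_eq_zero_iff (n := 2) (by norm_num) |>.mp h2
  linear_combination hxy - CharTwo.add_self_eq_zero y

private lemma constr1 {k : Type*} [Field k] [IsAlgClosed k] [CharP k 2]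
    (A B C D : k) (hA : A ≠ 0) :
    ∃ y₁ y₂ y₃ y₀ t : k, t ≠ 0 ∧
        A = t * y₂ ^ 2 ∧ B = t * y₁ ^ 2 ∧
        C = t * (y₂ * y₃ + y₁ * y₀) ∧ D = t * (y₀ ^ 2 + y₁ * y₂) := by
  obtain ⟨y₂, hy₂⟩ := sqrt_exists A
  obtain ⟨y₁, hy₁⟩ := sqrt_exists B
  have hy₂0 : y₂ ≠ 0 := fun h => hA (by rw [← hy₂, h]; ring)
  obtain ⟨y₀, hy₀⟩ := sqrt_exists (D + y₁ * y₂)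
  refine ⟨y₁, y₂, (C + y₁ * y₀) / y₂, y₀, 1, one_ne_zero, ?_, ?_, ?_, ?_⟩
  · rw [one_mul, hy₂]
  · rw [one_mul, hy₁]
  · have h2 : (2 : k) = 0 := CharTwo.two_eq_zero
    field_simp
    linear_combination (-(y₁ * y₀)) * h2
  · have h2 : (2 : k) = 0 := CharTwo.two_eq_zero
    rw [one_mul, hy₀]
    linear_combination (-(y₁ * y₂)) * h2

/-- Image of the Verschiebung of a supersingular genus 2 curve over an algebraically
closed field of characteristic 2: a nonzero `(A, B, C, D)` is a nonzero scalar multiple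
of `(y₂², y₁², y₂y₃ + y₁y_∞, y_∞² + y₁y₂)` for some `y` if and only if `A ≠ 0` or
`C² = BD`. In particular the map is dominant but not surjective. -/
theorem stmt14 (k : Type*) [Field k] [IsAlgClosed k] [CharP k 2] (A B C D : k)
    (h0 : (A, B, C, D) ≠ (0, 0, 0, 0)) :
    (∃ y₁ y₂ y₃ y₀ t : k, t ≠ 0 ∧
        A = t * y₂ ^ 2 ∧ B = t * y₁ ^ 2 ∧
        C = t * (y₂ * y₃ + y₁ * y₀) ∧ D = t * (y₀ ^ 2 + y₁ * y₂))
      ↔ (A ≠ 0 ∨ C ^ 2 = B * D) := by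
  constructor
  · rintro ⟨y₁, y₂, y₃, y₀, t, ht, hA, hB, hC, hD⟩
    by_cases hA0 : A = 0
    · right
      have hy2 : y₂ = 0 := by
        have h : t * y₂ ^ 2 = 0 := by rw [← hA, hA0]
        rcases mul_eq_zero.mp h with h | h
        · exact absurd h ht
        · exact pow_eq_zero_iff (by norm_num) |>.mp h
      subst hy2
      rw [hB, hC, hD]; ring
    · exact Or.inl hA0
  · intro h
    by_cases hA0 : A = 0
    · have hCBD : C ^ 2 = B * D := h.resolve_left (by simpa using hA0)
      by_cases hB : B = 0
      · have hC : C = 0 := by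
          have : C ^ 2 = 0 := by rw [hCBD, hB, zero_mul]
          exact pow_eq_zero_iff (by norm_num) |>.mp this
        obtain ⟨y₀, hy₀⟩ := sqrt_exists D
        exact ⟨0, 0, 0, y₀, 1, one_ne_zero, by rw [hA0]; ring,
          by rw [hB]; ring, by rw [hC]; ring, by rw [one_mul, hy₀]; ring⟩
      · obtain ⟨y₁, hy₁⟩ := sqrt_exists B
        obtain ⟨y₀, hy₀⟩ := sqrt_exists D
        have hC : C = y₁ * y₀ := by
          apply sq_inj
          rw [hCBD, ← hy₁, ← hy₀]; ring
        exact ⟨y₁, 0, 0, y₀, 1, one_ne_zero, by rw [hA0]; ring,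
          by rw [one_mul, hy₁], by rw [hC]; ring, by rw [one_mul, hy₀]; ring⟩
    · exact constr1 A B C D hA0
end
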